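/- If φ is a first-order formula in negation normal form, M is a first-order model, and X is a team over M, then M satisfies φ under team semantics with team X if and only if every assignment s in X satisfies φ under Tarski semantics (the flatness property of first-order formulas). -/

import Mathlib

/-- Formulas of first-order logic with team semantics, in negation normal form,
over a relational signature `σ` (with arities `ar`) extended with dependency
atoms indexed by `δ` (with arities `dar`).  Equality and inequality literals
are between tuples of variables; variables are natural numbers. -/
inductive TForm (σ : Type) (ar : σ → ℕ) (δ : Type) (dar : δ → ℕ) : Type
  | rel (r : σ) (ts : Fin (ar r) → ℕ)
  | nrel (r : σ) (ts : Fin (ar r) → ℕ)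
  | eq (k : ℕ) (x y : Fin k → ℕ)
  | neq (k : ℕ) (x y : Fin k → ℕ)
  | dep (d : δ) (xs : Fin (dar d) → ℕ)
  | and (φ ψ : TForm σ ar δ dar)
  | or (φ ψ : TForm σ ar δ dar)
  | ex (v : ℕ) (φ : TForm σ ar δ dar)
  | all (v : ℕ) (φ : TForm σ ar δ dar)

/-- A team over a model with carrier `M`: a set of assignments. -/
abbrev Team (M : Type) := Set (ℕ → M)

/-- `X(x̄)`: the relation of values of the tuple `x̄` in the team `X`. -/
def Team.rel {M : Type} (X : Team M) {k : ℕ} (xs : Fin k → ℕ) : Set (Fin k → M) :=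
  {t | ∃ s ∈ X, t = fun i => s (xs i)}

/-- An interpretation of a family of dependencies: for each index, an
isomorphism-invariant-style class of pairs (carrier, relation). -/
abbrev DepFam (δ : Type) (dar : δ → ℕ) := ∀ d : δ, ∀ M : Type, Set (Fin (dar d) → M) → Prop

/-- Lax team semantics. -/
def tsat {σ : Type} {ar : σ → ℕ} {δ : Type} {dar : δ → ℕ} {M : Type}
    (RI : ∀ r : σ, Set (Fin (ar r) → M)) (DI : DepFam δ dar) :
    TForm σ ar δ dar → Team M → Prop
  | .rel r ts, X => ∀ s ∈ X, (fun i => s (ts i)) ∈ RI r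
  | .nrel r ts, X => ∀ s ∈ X, (fun i => s (ts i)) ∉ RI r
  | .eq _ x y, X => ∀ s ∈ X, (fun i => s (x i)) = fun i => s (y i)
  | .neq _ x y, X => ∀ s ∈ X, (fun i => s (x i)) ≠ fun i => s (y i)
  | .dep d xs, X => DI d M (X.rel xs)
  | .and φ ψ, X => tsat RI DI φ X ∧ tsat RI DI ψ X
  | .or φ ψ, X => ∃ Y Z, X = Y ∪ Z ∧ tsat RI DI φ Y ∧ tsat RI DI ψ Z
  | .ex v φ, X => ∃ H : (ℕ → M) → Set M, (∀ s ∈ X, (H s).Nonempty) ∧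
      tsat RI DI φ {s' | ∃ s ∈ X, ∃ m ∈ H s, s' = Function.update s v m}
  | .all v φ, X => tsat RI DI φ {s' | ∃ s ∈ X, ∃ m : M, s' = Function.update s v m}

/-- Tarski (single-assignment) semantics; dependency atoms are treated as
trivially true (they are only meaningful for first-order formulas). -/
def ssat {σ : Type} {ar : σ → ℕ} {δ : Type} {dar : δ → ℕ} {M : Type}
    (RI : ∀ r : σ, Set (Fin (ar r) → M)) :
    TForm σ ar δ dar → (ℕ → M) → Prop
  | .rel r ts, s => (fun i => s (ts i)) ∈ RI r
  | .nrel r ts, s => (fun i => s (ts i)) ∉ RI r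
  | .eq _ x y, s => (fun i => s (x i)) = fun i => s (y i)
  | .neq _ x y, s => (fun i => s (x i)) ≠ fun i => s (y i)
  | .dep _ _, _ => True
  | .and φ ψ, s => ssat RI φ s ∧ ssat RI ψ s
  | .or φ ψ, s => ssat RI φ s ∨ ssat RI ψ s
  | .ex v φ, s => ∃ m : M, ssat RI φ (Function.update s v m)
  | .all v φ, s => ∀ m : M, ssat RI φ (Function.update s v m)

/-- A formula is first-order if it contains no dependency atoms. -/
def TForm.isFO {σ : Type} {ar : σ → ℕ} {δ : Type} {dar : δ → ℕ} :
    TForm σ ar δ dar → Prop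
  | .dep _ _ => False
  | .and φ ψ => φ.isFO ∧ ψ.isFO
  | .or φ ψ => φ.isFO ∧ ψ.isFO
  | .ex _ φ => φ.isFO
  | .all _ φ => φ.isFO
  | _ => True

/-- Free variables of a formula. -/
def TForm.free {σ : Type} {ar : σ → ℕ} {δ : Type} {dar : δ → ℕ} :
    TForm σ ar δ dar → Set ℕ
  | .rel _ ts => Set.range ts
  | .nrel _ ts => Set.range ts
  | .eq _ x y => Set.range x ∪ Set.range y
  | .neq _ x y => Set.range x ∪ Set.range y
  | .dep _ xs => Set.range xs
  | .and φ ψ => φ.free ∪ ψ.free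
  | .or φ ψ => φ.free ∪ ψ.free
  | .ex v φ => φ.free \ {v}
  | .all v φ => φ.free \ {v}

/-- The flattening `φᶠ`: replace every dependency atom by the trivially true
atom `⊤` (here rendered as the empty-tuple equality). -/
def TForm.flatten {σ : Type} {ar : σ → ℕ} {δ : Type} {dar : δ → ℕ} :
    TForm σ ar δ dar → TForm σ ar δ dar
  | .dep _ _ => .eq 0 Fin.elim0 Fin.elim0
  | .and φ ψ => .and φ.flatten ψ.flatten
  | .or φ ψ => .or φ.flatten ψ.flatten
  | .ex v φ => .ex v φ.flatten
  | .all v φ => .all v φ.flatten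
  | φ => φ

/-- Negation normal form of the negation of a (first-order) formula. -/
def TForm.neg {σ : Type} {ar : σ → ℕ} {δ : Type} {dar : δ → ℕ} :
    TForm σ ar δ dar → TForm σ ar δ dar
  | .rel r ts => .nrel r ts
  | .nrel r ts => .rel r ts
  | .eq k x y => .neq k x y
  | .neq k x y => .eq k x y
  | .dep d xs => .dep d xs
  | .and φ ψ => .or φ.neg ψ.neg
  | .or φ ψ => .and φ.neg ψ.neg
  | .ex v φ => .all v φ.neg
  | .all v φ => .ex v φ.neg

/-- `(ψ ↾ θ) := (¬θ) ∨ (θ ∧ ψ)`. -/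
def TForm.restrict {σ : Type} {ar : σ → ℕ} {δ : Type} {dar : δ → ℕ}
    (ψ θ : TForm σ ar δ dar) : TForm σ ar δ dar :=
  .or θ.neg (.and θ ψ)

/-- A family of dependencies is upwards closed. -/
def UpClosed {δ : Type} {dar : δ → ℕ} (DI : DepFam δ dar) : Prop :=
  ∀ (d : δ) (M : Type) (R S : Set (Fin (dar d) → M)), R ⊆ S → DI d M R → DI d M S

/-- The constancy dependency of arity `n`. -/
def ConstD (n : ℕ) : ∀ M : Type, Set (Fin n → M) → Prop :=
  fun _ R => ∀ t ∈ R, ∀ t' ∈ R, t = t'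

/-!
Induction on the formula. Conjunction and the universal quantifier commute with
"for every assignment of the team"; a disjunction holds in `X` by splitting `X` according to
which disjunct each assignment satisfies, and an existential quantifier by letting `H s` be the
set of all Tarski witnesses for `s`.
-/

namespace TForm

variable {σ : Type} {ar : σ → ℕ} {δ : Type} {dar : δ → ℕ} {M : Type}
  (RI : ∀ r : σ, Set (Fin (ar r) → M)) (DI : DepFam δ dar)

def IsFlat (φ : TForm σ ar δ dar) : Prop :=
  ∀ X : Team M, tsat RI DI φ X ↔ ∀ s ∈ X, ssat RI φ s

variable {RI DI}

theorem IsFlat.and {φ ψ : TForm σ ar δ dar} (hφ : IsFlat RI DI φ) (hψ : IsFlat RI DI ψ) :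
    IsFlat RI DI (.and φ ψ) := fun X => by
  simp only [tsat, ssat, hφ X, hψ X]
  exact forall₂_and.symm

theorem IsFlat.or {φ ψ : TForm σ ar δ dar} (hφ : IsFlat RI DI φ) (hψ : IsFlat RI DI ψ) :
    IsFlat RI DI (.or φ ψ) := fun X => by
  simp only [tsat, ssat]
  constructor
  · rintro ⟨Y, Z, rfl, hY, hZ⟩ s (hs | hs)
    · exact .inl ((hφ Y).1 hY s hs)
    · exact .inr ((hψ Z).1 hZ s hs)
  · intro h
    refine ⟨{s ∈ X | ssat RI φ s}, {s ∈ X | ssat RI ψ s}, ?_,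
      (hφ _).2 fun s hs => hs.2, (hψ _).2 fun s hs => hs.2⟩
    ext s
    constructor
    · intro hs
      exact (h s hs).imp (⟨hs, ·⟩) (⟨hs, ·⟩)
    · rintro (⟨hs, -⟩ | ⟨hs, -⟩) <;> exact hs

theorem IsFlat.ex {φ : TForm σ ar δ dar} (v : ℕ) (hφ : IsFlat RI DI φ) :
    IsFlat RI DI (.ex v φ) := fun X => by
  simp only [tsat, ssat]
  constructor
  · rintro ⟨H, hne, hsat⟩ s hs
    obtain ⟨m, hm⟩ := hne s hs
    exact ⟨m, (hφ _).1 hsat _ ⟨s, hs, m, hm, rfl⟩⟩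
  · intro h
    refine ⟨fun s => {m | ssat RI φ (Function.update s v m)}, h, (hφ _).2 ?_⟩
    rintro _ ⟨s, -, m, hm, rfl⟩
    exact hm

theorem IsFlat.all {φ : TForm σ ar δ dar} (v : ℕ) (hφ : IsFlat RI DI φ) :
    IsFlat RI DI (.all v φ) := fun X => by
  simp only [tsat, ssat, hφ _]
  constructor
  · intro h s hs m
    exact h _ ⟨s, hs, m, rfl⟩
  · rintro h _ ⟨s, hs, m, rfl⟩
    exact h s hs m

theorem IsFlat.of_isFO {φ : TForm σ ar δ dar} (hφ : φ.isFO) : IsFlat RI DI φ := by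
  induction φ with
  | rel | nrel | eq | neq => exact fun _ => Iff.rfl
  | dep => exact hφ.elim
  | and φ ψ ihφ ihψ => exact (ihφ hφ.1).and (ihψ hφ.2)
  | or φ ψ ihφ ihψ => exact (ihφ hφ.1).or (ihψ hφ.2)
  | ex v φ ih => exact (ih hφ).ex v
  | all v φ ih => exact (ih hφ).all v

end TForm

theorem flatness {σ : Type} {ar : σ → ℕ} {δ : Type} {dar : δ → ℕ} {M : Type}
    (RI : ∀ r : σ, Set (Fin (ar r) → M)) (DI : DepFam δ dar)
    (φ : TForm σ ar δ dar) (hφ : φ.isFO) (X : Team M) :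
    tsat RI DI φ X ↔ ∀ s ∈ X, ssat RI φ s :=
  TForm.IsFlat.of_isFO hφ X
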